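/- arXiv:2208.13634 — 8 statements merged into one kernel-verified Lean document; each statement's English description precedes it below -/
import Mathlib

section
/- (Intrinsic constraint between hiddenness and measurement dependence) For any finite set Λ and any family of probability distributions {p(·|i)}_{i=1}^{4} on Λ, the inequality H ≥ M/8 holds, where H = 1 − (1/4)·max_λ Σ_i p(λ|i) and M = max_{i,j} Σ_λ |p(λ|i) − p(λ|j)|. Equivalently, (1/4)·max_λ Σ_i p(λ|i) + (1/8)·max_{i,j} Σ_λ |p(λ|i) − p(λ|j)| ≤ 1. -/
/-- Measurement dependence `M = max_{i,j} Σ_λ |p(λ|i) − p(λ|j)|`. -/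
noncomputable def measDep {Λ : Type*} [Fintype Λ] (p : Λ → Fin 4 → ℝ) : ℝ :=
  (Finset.univ : Finset (Fin 4 × Fin 4)).sup' ⟨(0,0), Finset.mem_univ _⟩
    (fun ij => ∑ l, |p l ij.1 - p l ij.2|)

/-- `H̃ = max_λ Σ_i p(λ|i)`. -/
noncomputable def hidW {Λ : Type*} [Fintype Λ] [Nonempty Λ] (p : Λ → Fin 4 → ℝ) : ℝ :=
  (Finset.univ : Finset Λ).sup' Finset.univ_nonempty (fun l => ∑ i, p l i)

/-- Hiddenness `H = 1 − (1/4)·max_λ Σ_i p(λ|i)`. -/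
noncomputable def hiddenness {Λ : Type*} [Fintype Λ] [Nonempty Λ] (p : Λ → Fin 4 → ℝ) : ℝ :=
  1 - (1/4) * hidW p

/-- `K = Σ_λ min_i p(λ|i)`. -/
noncomputable def kVal {Λ : Type*} [Fintype Λ] (p : Λ → Fin 4 → ℝ) : ℝ :=
  ∑ l, (Finset.univ : Finset (Fin 4)).inf' ⟨0, Finset.mem_univ _⟩ (p l)

/-- Optimal CHSH value `S_opt = 4 − 2K`. -/
noncomputable def sOpt {Λ : Type*} [Fintype Λ] (p : Λ → Fin 4 → ℝ) : ℝ :=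
  4 - 2 * kVal p

theorem stmt_4 {Λ : Type*} [Fintype Λ] [Nonempty Λ] (p : Λ → Fin 4 → ℝ)
    (hpos : ∀ l i, 0 ≤ p l i) (hsum : ∀ i, ∑ l, p l i = 1) :
    hiddenness p ≥ measDep p / 8 ∧
    (1/4) * hidW p + (1/8) * measDep p ≤ 1 := by
  obtain ⟨l0, -, hl0⟩ := Finset.exists_mem_eq_sup' (Finset.univ_nonempty (α := Λ))
    (fun l => ∑ i, p l i)
  have hle1 : ∀ k, p l0 k ≤ 1 := by
    intro k
    rw [← hsum k]
    exact Finset.single_le_sum (fun l _ => hpos l k) (Finset.mem_univ l0)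
  have key : measDep p ≤ 8 - 2 * hidW p := by
    rw [measDep, hidW, hl0]
    apply Finset.sup'_le
    rintro ⟨i, j⟩ -
    have habs : ∀ l : Λ, |p l i - p l j| = p l i + p l j - 2 * min (p l i) (p l j) := by
      intro l
      rcases le_total (p l i) (p l j) with h | h
      · rw [min_eq_left h, abs_of_nonpos (by linarith)]; ring
      · rw [min_eq_right h, abs_of_nonneg (by linarith)]; ring
    have hsumeq : ∑ l, |p l i - p l j|
        = 2 - 2 * ∑ l, min (p l i) (p l j) := by
      have heq : ∑ l, |p l i - p l j|
          = (∑ l, p l i) + (∑ l, p l j) - 2 * ∑ l, min (p l i) (p l j) := by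
        rw [← Finset.sum_add_distrib, Finset.mul_sum, ← Finset.sum_sub_distrib]
        exact Finset.sum_congr rfl (fun l _ => by rw [habs l])
      rw [heq, hsum, hsum]; ring
    have hminle : min (p l0 i) (p l0 j) ≤ ∑ l, min (p l i) (p l j) :=
      Finset.single_le_sum (fun l _ => le_min (hpos l i) (hpos l j))
        (Finset.mem_univ l0)
    have hS : ∑ k, p l0 k ≤ 3 + min (p l0 i) (p l0 j) := by
      rcases le_total (p l0 i) (p l0 j) with h | h
      · rw [min_eq_left h]
        have h3 : ∑ k ∈ ({i}ᶜ : Finset (Fin 4)), p l0 k ≤ 3 := by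
          calc ∑ k ∈ ({i}ᶜ : Finset (Fin 4)), p l0 k
              ≤ ∑ _k ∈ ({i}ᶜ : Finset (Fin 4)), (1:ℝ) :=
                Finset.sum_le_sum (fun k _ => hle1 k)
            _ = 3 := by simp [Finset.card_compl]
        have hsplit : ∑ k, p l0 k = p l0 i + ∑ k ∈ ({i}ᶜ : Finset (Fin 4)), p l0 k := by
          rw [← Finset.sum_compl_add_sum ({i} : Finset (Fin 4)) (p l0)]
          simp [add_comm]
        linarith
      · rw [min_eq_right h]
        have h3 : ∑ k ∈ ({j}ᶜ : Finset (Fin 4)), p l0 k ≤ 3 := by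
          calc ∑ k ∈ ({j}ᶜ : Finset (Fin 4)), p l0 k
              ≤ ∑ _k ∈ ({j}ᶜ : Finset (Fin 4)), (1:ℝ) :=
                Finset.sum_le_sum (fun k _ => hle1 k)
            _ = 3 := by simp [Finset.card_compl]
        have hsplit : ∑ k, p l0 k = p l0 j + ∑ k ∈ ({j}ᶜ : Finset (Fin 4)), p l0 k := by
          rw [← Finset.sum_compl_add_sum ({j} : Finset (Fin 4)) (p l0)]
          simp [add_comm]
        linarith
    rw [hsumeq]
    linarith
  constructor
  · rw [hiddenness]; linarith
  · linarith
end

section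
/- (Main relaxed Bell-CHSH trade-off) For any finite set Λ and any family of probability distributions {p(·|i)}_{i=1}^{4} on Λ, define K = Σ_λ min_i p(λ|i), M = max_{i,j} Σ_λ |p(λ|i) − p(λ|j)|, and H̃ = max_λ Σ_i p(λ|i). Then 2K + (3/4)M − (1/2)H̃ ≥ 0. Equivalently, the optimal CHSH value S_opt = 4 − 2K satisfies S_opt ≤ 2 + (3/4)M + 2H with H = 1 − H̃/4. -/
theorem stmt_5 {Λ : Type*} [Fintype Λ] [Nonempty Λ] (p : Λ → Fin 4 → ℝ)
    (hpos : ∀ l i, 0 ≤ p l i) (hsum : ∀ i, ∑ l, p l i = 1) :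
    2 * kVal p + (3/4) * measDep p - (1/2) * hidW p ≥ 0 ∧
    sOpt p ≤ 2 + (3/4) * measDep p + 2 * hiddenness p := by
  classical
  -- choose λ* achieving H̃
  obtain ⟨l₀, -, hl₀⟩ := Finset.exists_mem_eq_sup' (Finset.univ_nonempty (α := Λ))
    (fun l => ∑ i, p l i)
  have hH : hidW p = ∑ i, p l₀ i := hl₀
  -- the minimum at λ*
  set m := (Finset.univ : Finset (Fin 4)).inf' ⟨0, Finset.mem_univ _⟩ (p l₀) with hm
  obtain ⟨i₂, -, hi₂⟩ := Finset.exists_mem_eq_inf' (⟨0, Finset.mem_univ _⟩ :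
      (Finset.univ : Finset (Fin 4)).Nonempty) (p l₀)
  -- key: 2*(p l₀ i - p l₀ j) ≤ measDep p
  have key : ∀ i j : Fin 4, 2 * (p l₀ i - p l₀ j) ≤ measDep p := by
    intro i j
    have h0 : ∑ l, (p l i - p l j) = 0 := by
      rw [Finset.sum_sub_distrib, hsum, hsum]; ring
    have hsplit : (p l₀ i - p l₀ j) + ∑ l ∈ Finset.univ.erase l₀, (p l i - p l j) = 0 := by
      exact (Finset.add_sum_erase _ (fun l => p l i - p l j)
        (Finset.mem_univ l₀)).trans h0
    have h1 : p l₀ i - p l₀ j ≤ |p l₀ i - p l₀ j| := le_abs_self _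
    have h2 : -∑ l ∈ Finset.univ.erase l₀, (p l i - p l j)
        ≤ ∑ l ∈ Finset.univ.erase l₀, |p l i - p l j| := by
      rw [← Finset.sum_neg_distrib]
      exact Finset.sum_le_sum fun l _ => neg_le_abs _
    have h3 : |p l₀ i - p l₀ j| + ∑ l ∈ Finset.univ.erase l₀, |p l i - p l j|
        = ∑ l, |p l i - p l j| :=
      Finset.add_sum_erase _ (fun l => |p l i - p l j|) (Finset.mem_univ l₀)
    have h4 : ∑ l, |p l i - p l j| ≤ measDep p :=
      Finset.le_sup' (f := fun ij : Fin 4 × Fin 4 => ∑ l, |p l ij.1 - p l ij.2|)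
        (Finset.mem_univ (i, j))
    linarith
  -- each p l₀ i ≤ m + measDep/2
  have hub : ∀ i : Fin 4, p l₀ i ≤ m + measDep p / 2 := by
    intro i
    have h := key i i₂
    have hmi : m = p l₀ i₂ := hm.trans hi₂
    linarith
  -- bound the sum at λ*
  have hsum4 : ∑ i, p l₀ i ≤ 4 * m + (3/2) * measDep p := by
    have hsplit : p l₀ i₂ + ∑ i ∈ Finset.univ.erase i₂, p l₀ i = ∑ i, p l₀ i :=
      Finset.add_sum_erase _ (fun i => p l₀ i) (Finset.mem_univ i₂)
    have hcard : (Finset.univ.erase i₂).card = 3 := by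
      rw [Finset.card_erase_of_mem (Finset.mem_univ i₂)]; simp
    have h5 : ∑ i ∈ Finset.univ.erase i₂, p l₀ i
        ≤ ∑ _i ∈ Finset.univ.erase i₂, (m + measDep p / 2) :=
      Finset.sum_le_sum fun i _ => hub i
    rw [Finset.sum_const, hcard, nsmul_eq_mul] at h5
    have hmi : p l₀ i₂ = m := hi₂.symm
    push_cast at h5
    linarith
  -- m ≤ kVal p
  have hK : m ≤ kVal p := by
    have hnn : ∀ l, 0 ≤ (Finset.univ : Finset (Fin 4)).inf' ⟨0, Finset.mem_univ _⟩ (p l) :=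
      fun l => Finset.le_inf' _ _ fun i _ => hpos l i
    exact Finset.single_le_sum (fun l _ => hnn l) (Finset.mem_univ l₀)
  have main : 2 * kVal p + (3/4) * measDep p - (1/2) * hidW p ≥ 0 := by
    rw [hH]; linarith
  refine ⟨main, ?_⟩
  unfold sOpt hiddenness
  linarith
end

section
/- (Optimal CHSH value bound, lower part of the trade-off) For any finite set Λ and any family of probability distributions {p(·|i)}_{i=1}^{4} on Λ, the optimal CHSH value S_opt = 4 − 2·Σ_λ min_i p(λ|i) satisfies S_opt ≥ 2 + M where M = max_{i,j} Σ_λ |p(λ|i) − p(λ|j)|; equivalently, Σ_λ min_i p(λ|i) ≤ 1 − M/2. -/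
theorem stmt_10 {Λ : Type*} [Fintype Λ] [Nonempty Λ] (p : Λ → Fin 4 → ℝ)
    (hpos : ∀ l i, 0 ≤ p l i) (hsum : ∀ i, ∑ l, p l i = 1) :
    sOpt p ≥ 2 + measDep p ∧ kVal p ≤ 1 - measDep p / 2 := by
  have key : measDep p ≤ 2 - 2 * kVal p := by
    apply Finset.sup'_le
    intro ij _
    have h1 : ∀ l, |p l ij.1 - p l ij.2| ≤
        p l ij.1 + p l ij.2 -
          2 * (Finset.univ : Finset (Fin 4)).inf' ⟨0, Finset.mem_univ _⟩ (p l) := by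
      intro l
      have hi : (Finset.univ : Finset (Fin 4)).inf' ⟨0, Finset.mem_univ _⟩ (p l) ≤ p l ij.1 :=
        Finset.inf'_le _ (Finset.mem_univ _)
      have hj : (Finset.univ : Finset (Fin 4)).inf' ⟨0, Finset.mem_univ _⟩ (p l) ≤ p l ij.2 :=
        Finset.inf'_le _ (Finset.mem_univ _)
      rw [abs_sub_le_iff]
      constructor <;> linarith
    calc ∑ l, |p l ij.1 - p l ij.2|
        ≤ ∑ l, (p l ij.1 + p l ij.2 -
            2 * (Finset.univ : Finset (Fin 4)).inf' ⟨0, Finset.mem_univ _⟩ (p l)) :=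
          Finset.sum_le_sum fun l _ => h1 l
      _ = 2 - 2 * kVal p := by
          simp only [Finset.sum_sub_distrib, Finset.sum_add_distrib, hsum,
            ← Finset.mul_sum, kVal]
          ring
  constructor
  · unfold sOpt; linarith
  · linarith
end

section
/- (Hall-type bound, upper part with factor 3) For any finite set Λ and any family of probability distributions {p(·|i)}_{i=1}^{4} on Λ, the optimal CHSH value S_opt = 4 − 2·Σ_λ min_i p(λ|i) satisfies S_opt ≤ 2 + 3M, where M = max_{i,j} Σ_λ |p(λ|i) − p(λ|j)|; equivalently, Σ_λ min_i p(λ|i) ≥ 1 − (3/2)M. -/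
theorem stmt_11 {Λ : Type*} [Fintype Λ] [Nonempty Λ] (p : Λ → Fin 4 → ℝ)
    (hpos : ∀ l i, 0 ≤ p l i) (hsum : ∀ i, ∑ l, p l i = 1) :
    sOpt p ≤ 2 + 3 * measDep p ∧ kVal p ≥ 1 - (3/2) * measDep p := by
  set M := measDep p with hMdef
  -- bound each pairwise TV distance by M
  have hM : ∀ i : Fin 4, ∑ l, |p l 0 - p l i| ≤ M := by
    intro i
    exact Finset.le_sup' (f := fun ij : Fin 4 × Fin 4 => ∑ l, |p l ij.1 - p l ij.2|)
      (Finset.mem_univ (0, i))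
  -- positive part sum equals half the TV distance
  have hpart : ∀ i : Fin 4, ∑ l, max (p l 0 - p l i) 0 = (1/2) * ∑ l, |p l 0 - p l i| := by
    intro i
    have h0 : ∑ l, (p l 0 - p l i) = 0 := by
      rw [Finset.sum_sub_distrib, hsum, hsum]; ring
    have : ∑ l, max (p l 0 - p l i) 0
        = ∑ l, ((|p l 0 - p l i| + (p l 0 - p l i)) / 2) := by
      apply Finset.sum_congr rfl
      intro l _
      rcases le_total (p l 0 - p l i) 0 with h | h
      · rw [max_eq_right h, abs_of_nonpos h]; ring
      · rw [max_eq_left h, abs_of_nonneg h]; ring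
    rw [this, ← Finset.sum_div, Finset.sum_add_distrib, h0, add_zero]
    ring
  -- key pointwise bound
  have hkey : ∀ l : Λ, p l 0 - ∑ i, max (p l 0 - p l i) 0
      ≤ (Finset.univ : Finset (Fin 4)).inf' ⟨0, Finset.mem_univ _⟩ (p l) := by
    intro l
    apply Finset.le_inf'
    intro j _
    have h1 : p l 0 - p l j ≤ max (p l 0 - p l j) 0 := le_max_left _ _
    have h2 : max (p l 0 - p l j) 0 ≤ ∑ i, max (p l 0 - p l i) 0 := by
      apply Finset.single_le_sum (f := fun i => max (p l 0 - p l i) 0)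
      · intro i _; exact le_max_right _ _
      · exact Finset.mem_univ j
    linarith
  have hK : kVal p ≥ 1 - (3/2) * M := by
    have hsumkey : ∑ l, (p l 0 - ∑ i, max (p l 0 - p l i) 0) ≤ kVal p :=
      Finset.sum_le_sum fun l _ => hkey l
    have hswap : ∑ l, ∑ i : Fin 4, max (p l 0 - p l i) 0
        = ∑ i : Fin 4, ∑ l, max (p l 0 - p l i) 0 := Finset.sum_comm
    have hbound : ∑ i : Fin 4, ∑ l, max (p l 0 - p l i) 0 ≤ (3/2) * M := by
      have h0M : 0 ≤ M := by
        have := hM 0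
        have h0 : (0:ℝ) ≤ ∑ l, |p l 0 - p l 0| :=
          Finset.sum_nonneg fun l _ => abs_nonneg _
        linarith
      have heach : ∀ i : Fin 4, ∑ l, max (p l 0 - p l i) 0 ≤ (1/2) * M := by
        intro i
        rw [hpart i]
        linarith [hM i]
      have h00 : ∑ l, max (p l 0 - p l 0) 0 = 0 := by
        simp
      calc ∑ i : Fin 4, ∑ l, max (p l 0 - p l i) 0
          = ∑ i ∈ ({1,2,3} : Finset (Fin 4)), ∑ l, max (p l 0 - p l i) 0 := by
            rw [show (Finset.univ : Finset (Fin 4)) = {0,1,2,3} by decide]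
            rw [Finset.sum_insert (by decide), h00, zero_add]
        _ ≤ ∑ i ∈ ({1,2,3} : Finset (Fin 4)), (1/2) * M :=
            Finset.sum_le_sum fun i _ => heach i
        _ = (3/2) * M := by
            rw [Finset.sum_const, show ({1,2,3} : Finset (Fin 4)).card = 3 by decide]
            push_cast; ring
    have hleft : ∑ l, (p l 0 - ∑ i : Fin 4, max (p l 0 - p l i) 0)
        = 1 - ∑ i : Fin 4, ∑ l, max (p l 0 - p l i) 0 := by
      rw [Finset.sum_sub_distrib, hsum, hswap]
    linarith [hsumkey, hleft ▸ hsumkey]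
  exact ⟨by unfold sOpt; linarith, hK⟩
end

section
/- (Two-hidden-variable case saturates the lower bound) Let Λ = {λ₁, λ₂} and {p(·|i)}_{i=1}^{4} be probability distributions on Λ. Then the optimal CHSH value equals exactly 2 + M: that is, 4 − 2·Σ_λ min_i p(λ|i) = 2 + max_{i,j} Σ_λ |p(λ|i) − p(λ|j)|. -/
theorem stmt_13 (p : Fin 2 → Fin 4 → ℝ)
    (hpos : ∀ l i, 0 ≤ p l i) (hsum : ∀ i, p 0 i + p 1 i = 1) :
    4 - 2 * kVal p = 2 + measDep p := by
  set a : Fin 4 → ℝ := p 0 with ha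
  have hne : (Finset.univ : Finset (Fin 4)).Nonempty := ⟨0, Finset.mem_univ _⟩
  set S := (Finset.univ : Finset (Fin 4)).sup' hne a with hS
  set I := (Finset.univ : Finset (Fin 4)).inf' hne a with hI
  obtain ⟨i0, -, hi0⟩ := Finset.exists_mem_eq_sup' hne a
  obtain ⟨j0, -, hj0⟩ := Finset.exists_mem_eq_inf' hne a
  have hSi : S = a i0 := hi0
  have hIj : I = a j0 := hj0
  have hIS : I ≤ S := le_trans (Finset.inf'_le a (Finset.mem_univ 0))
    (Finset.le_sup' a (Finset.mem_univ 0))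
  have hp1 : ∀ i, p 1 i = 1 - a i := fun i => by
    have := hsum i; linarith
  -- measDep = 2*(S - I)
  have hM : measDep p = 2 * (S - I) := by
    unfold measDep
    apply le_antisymm
    · apply Finset.sup'_le
      intro ij _
      have h1 : ∑ l, |p l ij.1 - p l ij.2| = 2 * |a ij.1 - a ij.2| := by
        rw [Fin.sum_univ_two, hp1, hp1]
        have : (1 - a ij.1) - (1 - a ij.2) = -(a ij.1 - a ij.2) := by ring
        rw [this, abs_neg]; ring
      rw [h1]
      have h2 : |a ij.1 - a ij.2| ≤ S - I := by
        rw [abs_sub_le_iff]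
        constructor
        · linarith [Finset.le_sup' a (Finset.mem_univ ij.1),
            Finset.inf'_le a (Finset.mem_univ ij.2)]
        · linarith [Finset.le_sup' a (Finset.mem_univ ij.2),
            Finset.inf'_le a (Finset.mem_univ ij.1)]
      linarith
    · have := Finset.le_sup' (fun ij : Fin 4 × Fin 4 => ∑ l, |p l ij.1 - p l ij.2|)
        (Finset.mem_univ (i0, j0))
      have hval : ∑ l, |p l (i0, j0).1 - p l (i0, j0).2| = 2 * (S - I) := by
        rw [Fin.sum_univ_two]
        show |a i0 - a j0| + |p 1 i0 - p 1 j0| = 2 * (S - I)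
        rw [hp1, hp1,
          show (1 - a i0) - (1 - a j0) = -(a i0 - a j0) by ring, abs_neg,
          abs_of_nonneg (by linarith)]
        linarith
      linarith
  -- kVal = I + (1 - S)
  have hK : kVal p = I + (1 - S) := by
    unfold kVal
    rw [Fin.sum_univ_two]
    congr 1
    apply le_antisymm
    · have := Finset.inf'_le (p 1) (Finset.mem_univ i0)
      rw [hp1] at this
      linarith
    · apply Finset.le_inf'
      intro i _
      rw [hp1]
      have := Finset.le_sup' a (Finset.mem_univ i)
      linarith
  rw [hK, hM]; ring
end

section
/- (Combined tight trade-off, inequality direction) For any finite set Λ and any family of probability distributions {p(·|i)}_{i=1}^{4} on Λ, with M = max_{i,j} Σ_λ |p(λ|i) − p(λ|j)|, H = 1 − (1/4)max_λ Σ_i p(λ|i), and S_opt = 4 − 2·Σ_λ min_i p(λ|i), we have 2 + M ≤ S_opt ≤ 2 + min(3M, (3/4)M + 2H, 2). -/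
lemma aux_half_sum {Λ : Type*} [Fintype Λ] (x : Λ → ℝ) (h : ∑ l, x l = 0) :
    ∑ l, max (x l) 0 = (1/2) * ∑ l, |x l| := by
  have key : ∀ a : ℝ, max a 0 = (a + |a|) / 2 := by
    intro a
    rcases le_or_gt 0 a with ha | ha
    · rw [abs_of_nonneg ha, max_eq_left ha]; ring
    · rw [abs_of_neg ha, max_eq_right ha.le]; ring
  simp_rw [key]
  rw [← Finset.sum_div, Finset.sum_add_distrib, h]
  ring

theorem stmt_15 {Λ : Type*} [Fintype Λ] [Nonempty Λ] (p : Λ → Fin 4 → ℝ)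
    (hpos : ∀ l i, 0 ≤ p l i) (hsum : ∀ i, ∑ l, p l i = 1) :
    2 + measDep p ≤ sOpt p ∧
    sOpt p ≤ 2 + min (min (3 * measDep p) ((3/4) * measDep p + 2 * hiddenness p)) 2 := by
  classical
  set m : Λ → ℝ := fun l => (Finset.univ : Finset (Fin 4)).inf' ⟨0, Finset.mem_univ _⟩ (p l)
    with hm_def
  have hm_le : ∀ l i, m l ≤ p l i := fun l i => Finset.inf'_le _ (Finset.mem_univ i)
  have hm_nonneg : ∀ l, 0 ≤ m l := by
    intro l
    obtain ⟨i, _, hi⟩ := Finset.exists_mem_eq_inf' ⟨(0 : Fin 4), Finset.mem_univ _⟩ (p l)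
    rw [hm_def]; simp only
    rw [hi]; exact hpos l i
  have hK : kVal p = ∑ l, m l := rfl
  have hK_nonneg : 0 ≤ kVal p := Finset.sum_nonneg fun l _ => hm_nonneg l
  have hmK : ∀ l, m l ≤ kVal p := fun l =>
    Finset.single_le_sum (fun l _ => hm_nonneg l) (Finset.mem_univ l)
  have hM_ge : ∀ i j : Fin 4, ∑ l, |p l i - p l j| ≤ measDep p := fun i j =>
    Finset.le_sup' (fun ij : Fin 4 × Fin 4 => ∑ l, |p l ij.1 - p l ij.2|)
      (Finset.mem_univ (i, j))
  have hdiff0 : ∀ i j : Fin 4, ∑ l, (p l i - p l j) = 0 := by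
    intro i j; rw [Finset.sum_sub_distrib, hsum, hsum]; ring
  have hhalf : ∀ i j : Fin 4, ∑ l, max (p l i - p l j) 0 ≤ measDep p / 2 := by
    intro i j
    rw [aux_half_sum _ (hdiff0 i j)]
    have := hM_ge i j
    linarith
  have hM_nonneg : 0 ≤ measDep p := by
    have := hM_ge 0 0
    simp at this
    linarith [hM_ge 0 0, Finset.sum_nonneg (fun l (_ : l ∈ (Finset.univ : Finset Λ)) =>
      abs_nonneg (p l 0 - p l 0))]
  -- Lower bound: M ≤ 2 - 2K
  have hlow : measDep p ≤ 2 - 2 * kVal p := by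
    apply Finset.sup'_le
    intro ij _
    have hpt : ∀ l : Λ, |p l ij.1 - p l ij.2| ≤ p l ij.1 + p l ij.2 - 2 * m l := by
      intro l
      have h1 := hm_le l ij.1
      have h2 := hm_le l ij.2
      rw [abs_sub_le_iff]
      constructor <;> linarith
    calc ∑ l, |p l ij.1 - p l ij.2| ≤ ∑ l, (p l ij.1 + p l ij.2 - 2 * m l) :=
          Finset.sum_le_sum fun l _ => hpt l
      _ = 2 - 2 * kVal p := by
          rw [Finset.sum_sub_distrib, Finset.sum_add_distrib, hsum, hsum,
            ← Finset.mul_sum, hK]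
          ring
  -- Upper bound 3M : 1 - K ≤ (3/2) M
  have hup3 : 1 - kVal p ≤ (3/2) * measDep p := by
    have h1 : 1 - kVal p = ∑ l, (p l 0 - m l) := by
      rw [Finset.sum_sub_distrib, hsum, hK]
    have h2 : ∀ l, p l 0 - m l ≤ ∑ i, max (p l 0 - p l i) 0 := by
      intro l
      obtain ⟨i, _, hi⟩ := Finset.exists_mem_eq_inf' ⟨(0 : Fin 4), Finset.mem_univ _⟩ (p l)
      have hml : m l = p l i := hi
      calc p l 0 - m l = p l 0 - p l i := by rw [hml]
        _ ≤ max (p l 0 - p l i) 0 := le_max_left _ _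
        _ ≤ ∑ j, max (p l 0 - p l j) 0 :=
            Finset.single_le_sum (f := fun j => max (p l 0 - p l j) 0)
              (fun j _ => le_max_right _ _) (Finset.mem_univ i)
    have h3 : ∑ l, (p l 0 - m l) ≤ ∑ l, ∑ i, max (p l 0 - p l i) 0 :=
      Finset.sum_le_sum fun l _ => h2 l
    have h4 : ∑ l, ∑ i : Fin 4, max (p l 0 - p l i) 0
        = ∑ i : Fin 4, ∑ l, max (p l 0 - p l i) 0 := Finset.sum_comm
    have h5 : ∑ l, max (p l 0 - p l 0) 0 = 0 := by simp
    have h6 : ∑ i : Fin 4, ∑ l, max (p l 0 - p l i) 0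
        = ∑ l, max (p l 0 - p l 0) 0 + ∑ l, max (p l 0 - p l 1) 0
          + ∑ l, max (p l 0 - p l 2) 0 + ∑ l, max (p l 0 - p l 3) 0 := by
      rw [Fin.sum_univ_four]
    have := hhalf 0 1
    have := hhalf 0 2
    have := hhalf 0 3
    rw [h1]
    calc ∑ l, (p l 0 - m l) ≤ ∑ i : Fin 4, ∑ l, max (p l 0 - p l i) 0 := by
          rw [← h4]; exact h3
      _ ≤ (3/2) * measDep p := by rw [h6, h5]; linarith
  -- Upper bound via hiddenness: W ≤ 4K + (3/2)M
  have hupW : hidW p ≤ 4 * kVal p + (3/2) * measDep p := by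
    apply Finset.sup'_le
    intro l _
    obtain ⟨i, _, hi⟩ := Finset.exists_mem_eq_inf' ⟨(0 : Fin 4), Finset.mem_univ _⟩ (p l)
    have hml : m l = p l i := hi
    have hsplit : ∑ j, p l j = ∑ j, (p l j - p l i) + 4 * p l i := by
      rw [Finset.sum_sub_distrib]
      simp [Finset.card_univ]
    have hbound : ∀ j : Fin 4, p l j - p l i ≤ measDep p / 2 := by
      intro j
      calc p l j - p l i ≤ max (p l j - p l i) 0 := le_max_left _ _
        _ ≤ ∑ l', max (p l' j - p l' i) 0 :=
            Finset.single_le_sum (f := fun l' => max (p l' j - p l' i) 0)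
              (fun l' _ => le_max_right _ _) (Finset.mem_univ l)
        _ ≤ measDep p / 2 := hhalf j i
    have herase : ∑ j, (p l j - p l i)
        = ∑ j ∈ Finset.univ.erase i, (p l j - p l i) := by
      rw [← Finset.add_sum_erase _ _ (Finset.mem_univ i)]
      ring
    have hcard : (Finset.univ.erase i).card = 3 := by
      rw [Finset.card_erase_of_mem (Finset.mem_univ i)]
      simp
    have hsum3 : ∑ j ∈ Finset.univ.erase i, (p l j - p l i) ≤ 3 * (measDep p / 2) := by
      calc ∑ j ∈ Finset.univ.erase i, (p l j - p l i)
          ≤ ∑ _j ∈ Finset.univ.erase i, (measDep p / 2) :=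
            Finset.sum_le_sum fun j _ => hbound j
        _ = 3 * (measDep p / 2) := by rw [Finset.sum_const, hcard]; ring
    have hpi : p l i ≤ kVal p := by rw [← hml]; exact hmK l
    calc ∑ j, p l j = ∑ j, (p l j - p l i) + 4 * p l i := hsplit
      _ ≤ 3 * (measDep p / 2) + 4 * kVal p := by
          rw [herase]; linarith
      _ = 4 * kVal p + (3/2) * measDep p := by ring
  refine ⟨by unfold sOpt; linarith, ?_⟩
  have h2K : sOpt p - 2 ≤ 2 := by unfold sOpt; linarith
  have h3M : sOpt p - 2 ≤ 3 * measDep p := by unfold sOpt; linarith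
  have hH : sOpt p - 2 ≤ (3/4) * measDep p + 2 * hiddenness p := by
    unfold sOpt hiddenness; linarith
  have := le_min (le_min h3M hH) h2K
  linarith
end

section
/- (Realizability of the region) For any real numbers m, h, s satisfying s ≤ 4, s − m − 2 ≥ 0, 3m + 2 − s ≥ 0, h − s/2 + 3m/8 + 1 ≥ 0, and h < 1, there exist a finite set Λ and probability distributions {p(·|i)}_{i=1}^{4} on Λ such that M = m, H = h, and S_opt = s, where M = max_{i,j} Σ_λ |p(λ|i) − p(λ|j)|, H = 1 − (1/4)max_λ Σ_i p(λ|i), and S_opt = 4 − 2·Σ_λ min_i p(λ|i). -/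
/-!
With `K = 2 - s/2`, `x = (s - 2 - m)/4` and `u = (3m + 2 - s)/4` (nonnegative, with
`K + 3x + u = 1`), take five atoms: a shared atom of mass `K + x + u` under the first three
inputs and `K` under the fourth; for each of the first three inputs, an atom of mass `x` under
every other input; and an atom of mass `u` private to the fourth input. Then `M = 2(x + u) = m`
and `Σ_λ min_i p(λ|i) = K`, while the shared atom has the largest total weight `4K + 3(x + u)`,
so the hiddenness is `s/2 - 3m/8 - 1`, the least value the region allows.

Splitting every atom into copies weighted by `c_k` with `Σ c_k = 1` leaves the marginals, `M`
and `K` unchanged (each is a sum over atoms of a positively homogeneous function of the atom)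
and multiplies the largest total weight by `max_k c_k`, which can be any `r ∈ (0, 1]`.
-/

open Finset

section SplitAtoms

variable {Λ κ : Type*} {c : κ → ℝ}

def splitAtoms (p : Λ → Fin 4 → ℝ) (c : κ → ℝ) : Λ × κ → Fin 4 → ℝ :=
  fun lk i => c lk.2 * p lk.1 i

lemma splitAtoms_nonneg {p : Λ → Fin 4 → ℝ} (hp : ∀ l i, 0 ≤ p l i) (hc : ∀ k, 0 ≤ c k)
    (lk : Λ × κ) (i : Fin 4) : 0 ≤ splitAtoms p c lk i :=
  mul_nonneg (hc _) (hp _ _)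

variable [Fintype Λ] [Fintype κ]

lemma sum_weight_mul_eq (hc : ∑ k, c k = 1) (f : Λ → ℝ) :
    ∑ lk : Λ × κ, c lk.2 * f lk.1 = ∑ l, f l := by
  rw [Fintype.sum_prod_type_right, ← sum_mul_sum, hc, one_mul]

lemma sum_splitAtoms (hc : ∑ k, c k = 1) (p : Λ → Fin 4 → ℝ) (i : Fin 4) :
    ∑ lk, splitAtoms p c lk i = ∑ l, p l i :=
  sum_weight_mul_eq hc fun l => p l i

lemma measDep_splitAtoms (hc0 : ∀ k, 0 ≤ c k) (hc : ∑ k, c k = 1) (p : Λ → Fin 4 → ℝ) :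
    measDep (splitAtoms p c) = measDep p := by
  refine sup'_congr _ rfl fun ij _ => ?_
  simp only [splitAtoms, ← mul_sub, abs_mul, abs_of_nonneg (hc0 _)]
  exact sum_weight_mul_eq hc fun l => |p l ij.1 - p l ij.2|

lemma kVal_splitAtoms (hc0 : ∀ k, 0 ≤ c k) (hc : ∑ k, c k = 1) (p : Λ → Fin 4 → ℝ) :
    kVal (splitAtoms p c) = kVal p := by
  have h (lk : Λ × κ) : univ.inf' ⟨0, mem_univ _⟩ (splitAtoms p c lk)
      = c lk.2 * univ.inf' ⟨0, mem_univ _⟩ (p lk.1) :=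
    (apply_inf'_eq_inf'_comp _ _ fun a b => mul_min_of_nonneg a b (hc0 lk.2)).symm
  simp only [kVal, h]
  exact sum_weight_mul_eq hc fun l => univ.inf' ⟨0, mem_univ _⟩ (p l)

lemma hidW_splitAtoms [Nonempty Λ] [Nonempty κ] {p : Λ → Fin 4 → ℝ} (hp : ∀ l i, 0 ≤ p l i)
    (hc0 : ∀ k, 0 ≤ c k) {r : ℝ} {k₀ : κ} (hcr : ∀ k, c k ≤ r) (hk₀ : c k₀ = r) :
    hidW (splitAtoms p c) = r * hidW p := by
  have hsum (lk : Λ × κ) : ∑ i, splitAtoms p c lk i = c lk.2 * ∑ i, p lk.1 i := by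
    simp only [splitAtoms, mul_sum]
  obtain ⟨l₀, -, hl₀⟩ := exists_mem_eq_sup' univ_nonempty fun l => ∑ i, p l i
  apply le_antisymm
  · refine sup'_le _ _ fun lk _ => ?_
    rw [hsum]
    exact mul_le_mul (hcr _) (le_sup' (fun l => ∑ i, p l i) (mem_univ lk.1))
      (sum_nonneg fun i _ => hp _ _) (hk₀ ▸ hc0 k₀)
  · refine le_sup'_of_le _ (mem_univ (l₀, k₀)) ?_
    rw [hsum, hidW, hl₀, hk₀]

end SplitAtoms

lemma exists_weights_max_eq {r : ℝ} (hr0 : 0 < r) (hr1 : r ≤ 1) :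
    ∃ (κ : Type) (_ : Fintype κ) (c : κ → ℝ) (k₀ : κ),
      (∀ k, 0 ≤ c k) ∧ ∑ k, c k = 1 ∧ (∀ k, c k ≤ r) ∧ c k₀ = r := by
  set n := ⌈1 / r⌉₊
  have hnr : 1 ≤ n * r := (div_le_iff₀ hr0).1 (Nat.le_ceil _)
  have hn : (0 : ℝ) < n := pos_of_mul_pos_left (one_pos.trans_le hnr) hr0.le
  refine ⟨Option (Fin n), inferInstance, fun k => k.elim r fun _ => (1 - r) / n, none,
    ?_, ?_, ?_, rfl⟩
  · rintro (_ | _)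
    exacts [hr0.le, div_nonneg (sub_nonneg.2 hr1) hn.le]
  · simp [Fintype.sum_option, mul_div_cancel₀ _ hn.ne']
  · rintro (_ | _)
    exacts [le_rfl, (div_le_iff₀ hn).2 (by linarith)]

section ExtremalModel

variable (K x u : ℝ)

def extremalModel : Fin 5 → Fin 4 → ℝ :=
  ![![K + (x + u), K + (x + u), K + (x + u), K],
    ![0, x, x, x],
    ![x, 0, x, x],
    ![x, x, 0, x],
    ![0, 0, 0, u]]

variable {K x u}

lemma sum_extremalModel (hmass : K + 3 * x + u = 1) (i : Fin 4) :
    ∑ l, extremalModel K x u l i = 1 := by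
  fin_cases i <;> simp [Fin.sum_univ_five, extremalModel] <;> linarith

variable (hx : 0 ≤ x) (hu : 0 ≤ u)
include hx hu

lemma extremalModel_nonneg (hK : 0 ≤ K) (l : Fin 5) (i : Fin 4) :
    0 ≤ extremalModel K x u l i := by
  fin_cases l <;> fin_cases i <;> simp [extremalModel] <;> positivity

lemma kVal_extremalModel : kVal (extremalModel K x u) = K := by
  have hmin (l : Fin 5) (j : Fin 4) (hj : ∀ i, extremalModel K x u l j ≤ extremalModel K x u l i) :
      univ.inf' ⟨0, mem_univ _⟩ (extremalModel K x u l) = extremalModel K x u l j :=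
    le_antisymm (inf'_le _ (mem_univ j)) (le_inf' _ _ fun i _ => hj i)
  rw [kVal, Fin.sum_univ_five, hmin 0 3, hmin 1 0, hmin 2 1, hmin 3 2, hmin 4 0]
  · simp [extremalModel]
  all_goals intro i; fin_cases i <;> simp [extremalModel] <;> positivity

lemma measDep_extremalModel : measDep (extremalModel K x u) = 2 * (x + u) := by
  apply le_antisymm
  · refine sup'_le _ _ fun ij _ => ?_
    obtain ⟨i, j⟩ := ij
    fin_cases i <;> fin_cases j <;>
      simp [Fin.sum_univ_five, extremalModel, abs_of_nonneg hx, abs_of_nonneg hu,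
        abs_of_nonneg (add_nonneg hx hu), abs_neg, -neg_add_rev] <;> linarith
  · refine le_sup'_of_le _ (mem_univ (0, 3)) (le_of_eq ?_)
    simp [Fin.sum_univ_five, extremalModel, abs_of_nonneg hx, abs_of_nonneg hu,
      abs_of_nonneg (add_nonneg hx hu)]
    ring

lemma hidW_extremalModel (hK : 0 ≤ K) : hidW (extremalModel K x u) = 4 * K + 3 * (x + u) := by
  apply le_antisymm
  · refine sup'_le _ _ fun l _ => ?_
    fin_cases l <;> simp [Fin.sum_univ_four, extremalModel] <;> linarith
  · refine le_sup'_of_le _ (mem_univ 0) (le_of_eq ?_)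
    simp [Fin.sum_univ_four, extremalModel]
    ring

end ExtremalModel

theorem stmt_16 (m h s : ℝ) (h1 : s ≤ 4) (h2 : 0 ≤ s - m - 2) (h3 : 0 ≤ 3 * m + 2 - s)
    (h4 : 0 ≤ h - s / 2 + 3 * m / 8 + 1) (h5 : h < 1) :
    ∃ (Λ : Type) (_ : Fintype Λ) (_ : Nonempty Λ) (p : Λ → Fin 4 → ℝ),
      (∀ l i, 0 ≤ p l i) ∧ (∀ i, ∑ l, p l i = 1) ∧
      measDep p = m ∧ hiddenness p = h ∧ sOpt p = s := by
  have hK : 0 ≤ 2 - s / 2 := by linarith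
  have hx : 0 ≤ (s - 2 - m) / 4 := by linarith
  have hu : 0 ≤ (3 * m + 2 - s) / 4 := by linarith
  set q := extremalModel (2 - s / 2) ((s - 2 - m) / 4) ((3 * m + 2 - s) / 4)
  have hq : ∀ l i, 0 ≤ q l i := extremalModel_nonneg hx hu hK
  have hmax : 4 * (2 - s / 2) + 3 * ((s - 2 - m) / 4 + (3 * m + 2 - s) / 4)
      = 8 - 2 * s + 3 * m / 2 := by ring
  obtain ⟨κ, _, c, k₀, hc0, hc, hcr, hk₀⟩ :=
    exists_weights_max_eq (r := (4 - 4 * h) / (8 - 2 * s + 3 * m / 2))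
      (div_pos (by linarith) (by linarith)) ((div_le_one (by linarith)).2 (by linarith))
  have : Nonempty κ := ⟨k₀⟩
  refine ⟨Fin 5 × κ, inferInstance, inferInstance, splitAtoms q c, splitAtoms_nonneg hq hc0,
    fun i => ?_, ?_, ?_, ?_⟩
  · rw [sum_splitAtoms hc, sum_extremalModel (by ring)]
  · rw [measDep_splitAtoms hc0 hc, measDep_extremalModel hx hu]
    ring
  · rw [hiddenness, hidW_splitAtoms hq hc0 hcr hk₀, hidW_extremalModel hx hu hK, hmax,
      div_mul_cancel₀ _ (by linarith)]
    ring
  · rw [sOpt, kVal_splitAtoms hc0 hc, kVal_extremalModel hx hu]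
    ring
end

section
/- (Shift transformation preserves K and M and increases H̃) Let Λ be a finite set containing distinct elements λ₁, λ₃, let {p(·|i)}_{i=1}^{4} be probability distributions on Λ, and let 0 ≤ p ≤ min_i p(λ₁|i). Define q(λ₁|i) = p(λ₁|i) − p, q(λ₃|i) = p(λ₃|i) + p, and q(λ|i) = p(λ|i) otherwise. If additionally max_λ Σ_i p(λ|i) = Σ_i p(λ₃|i) and min_i p(λ₁|i) = p, then Σ_λ min_i q(λ|i) = Σ_λ min_i p(λ|i), max_{i,j} Σ_λ |q(λ|i) − q(λ|j)| = max_{i,j} Σ_λ |p(λ|i) − p(λ|j)|, and max_λ Σ_i q(λ|i) = max_λ Σ_i p(λ|i) + 4p. -/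
/-- The shifted table: row `l₁` is decreased by `c`, row `l₃` is increased by `c`. -/
noncomputable def shiftTable {Λ : Type*} [DecidableEq Λ] (p : Λ → Fin 4 → ℝ)
    (l₁ l₃ : Λ) (c : ℝ) : Λ → Fin 4 → ℝ :=
  fun l i => if l = l₁ then p l i - c else if l = l₃ then p l i + c else p l i

open Finset

lemma Finset.inf'_add {ι G : Type*} [AddGroup G] [LinearOrder G] [AddRightMono G] (s : Finset ι)
    (f : ι → G) (a : G) (hs : s.Nonempty) : s.inf' hs f + a = s.inf' hs fun i => f i + a :=
  map_finset_inf' (OrderIso.addRight a) hs f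

section RowConstant

variable {Λ : Type*} [Fintype Λ] (p : Λ → Fin 4 → ℝ) (d : Λ → ℝ)

lemma kVal_add_rowConst : kVal (fun l i => p l i + d l) = kVal p + ∑ l, d l := by
  rw [kVal, kVal, ← sum_add_distrib]
  exact sum_congr rfl fun l _ => (inf'_add _ _ _ _).symm

lemma measDep_add_rowConst : measDep (fun l i => p l i + d l) = measDep p := by
  simp only [measDep, add_sub_add_right_eq_sub]

lemma hidW_add_rowConst [Nonempty Λ] {l₀ : Λ} (hd : ∀ l, d l ≤ d l₀)
    (hl₀ : hidW p = ∑ i, p l₀ i) :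
    hidW (fun l i => p l i + d l) = hidW p + 4 * d l₀ := by
  have hrow : ∀ l, ∑ i, (p l i + d l) = ∑ i, p l i + 4 * d l := fun l => by
    simp [sum_add_distrib]
  apply le_antisymm
  · refine sup'_le _ _ fun l _ => ?_
    rw [hrow]
    have : ∑ i, p l i ≤ hidW p := le_sup' (fun l => ∑ i, p l i) (mem_univ l)
    linarith [hd l]
  · calc hidW p + 4 * d l₀ = ∑ i, (p l₀ i + d l₀) := by rw [hrow, hl₀]
      _ ≤ _ := le_sup' (fun l => ∑ i, (p l i + d l)) (mem_univ l₀)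

end RowConstant

section Shift

variable {Λ : Type*} [DecidableEq Λ] {l₁ l₃ : Λ} {c : ℝ}

def shiftOffset (l₁ l₃ : Λ) (c : ℝ) (l : Λ) : ℝ :=
  if l = l₁ then -c else if l = l₃ then c else 0

lemma shiftTable_eq_add_shiftOffset (p : Λ → Fin 4 → ℝ) (l₁ l₃ : Λ) (c : ℝ) :
    shiftTable p l₁ l₃ c = fun l i => p l i + shiftOffset l₁ l₃ c l := by
  ext l i
  simp only [shiftTable, shiftOffset]
  split_ifs <;> ring

lemma shiftOffset_right (hne : l₁ ≠ l₃) : shiftOffset l₁ l₃ c l₃ = c := by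
  simp [shiftOffset, hne.symm]

lemma shiftOffset_le_right (hne : l₁ ≠ l₃) (hc : 0 ≤ c) (l : Λ) :
    shiftOffset l₁ l₃ c l ≤ shiftOffset l₁ l₃ c l₃ := by
  rw [shiftOffset_right hne, shiftOffset]
  split_ifs <;> linarith

lemma sum_shiftOffset [Fintype Λ] (hne : l₁ ≠ l₃) : ∑ l, shiftOffset l₁ l₃ c l = 0 := by
  rw [Fintype.sum_eq_add l₁ l₃ hne fun l ⟨h1, h3⟩ => by simp [shiftOffset, h1, h3],
    shiftOffset_right hne]
  simp [shiftOffset]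

end Shift

theorem stmt_18_general {Λ : Type*} [Fintype Λ] [Nonempty Λ] [DecidableEq Λ]
    (p : Λ → Fin 4 → ℝ) (l₁ l₃ : Λ) (hne : l₁ ≠ l₃) (c : ℝ) (hc : 0 ≤ c)
    (hmax : hidW p = ∑ i, p l₃ i) :
    kVal (shiftTable p l₁ l₃ c) = kVal p ∧
    measDep (shiftTable p l₁ l₃ c) = measDep p ∧
    hidW (shiftTable p l₁ l₃ c) = hidW p + 4 * c := by
  rw [shiftTable_eq_add_shiftOffset]
  refine ⟨?_, measDep_add_rowConst p _, ?_⟩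
  · rw [kVal_add_rowConst, sum_shiftOffset hne, add_zero]
  · rw [hidW_add_rowConst p _ (shiftOffset_le_right hne hc) hmax, shiftOffset_right hne]

theorem stmt_18 {Λ : Type*} [Fintype Λ] [Nonempty Λ] [DecidableEq Λ]
    (p : Λ → Fin 4 → ℝ) (l₁ l₃ : Λ) (hne : l₁ ≠ l₃) (c : ℝ) (hc : 0 ≤ c)
    (hpos : ∀ l i, 0 ≤ p l i) (hsum : ∀ i, ∑ l, p l i = 1)
    (hmax : hidW p = ∑ i, p l₃ i)
    (hmin : (Finset.univ : Finset (Fin 4)).inf' ⟨0, Finset.mem_univ _⟩ (p l₁) = c) :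
    kVal (shiftTable p l₁ l₃ c) = kVal p ∧
    measDep (shiftTable p l₁ l₃ c) = measDep p ∧
    hidW (shiftTable p l₁ l₃ c) = hidW p + 4 * c :=
  stmt_18_general p l₁ l₃ hne c hc hmax
end
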